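/- arXiv:2105.05905 — 3 statements merged into one kernel-verified Lean document; each statement's English description precedes it below -/
import Mathlib

section
/- Let φ : ℤ → GL(2,ℤ) be a homomorphism with A = φ(1) parabolic, and let Γ = ℤ² ⋊_φ ℤ. Then Γ contains no subgroup isomorphic to ℤ³. -/
open Matrix

/-- `GL(2,ℤ)`. -/
abbrev GL2Z := Matrix.GeneralLinearGroup (Fin 2) ℤ

/-- `A ∈ GL(2,ℤ)` is parabolic if it is conjugate in `GL(2,ℤ)` to `[[1,s],[0,1]]` with `s ≠ 0`. -/
def IsParabolic (A : GL2Z) : Prop :=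
  ∃ (P : GL2Z) (s : ℤ), s ≠ 0 ∧
    ((P * A * P⁻¹ : GL2Z) : Matrix (Fin 2) (Fin 2) ℤ) = !![1, s; 0, 1]

/-- The group `ℤ²`, written multiplicatively. -/
abbrev Z2 := Multiplicative (Fin 2 → ℤ)

/-- The automorphism of `ℤ²` induced by `A ∈ GL(2,ℤ)` (action by `Matrix.mulVec`). -/
def glAut (A : GL2Z) : MulAut Z2 where
  toFun v := Multiplicative.ofAdd ((A : Matrix (Fin 2) (Fin 2) ℤ).mulVec v.toAdd)
  invFun v := Multiplicative.ofAdd (((A⁻¹ : GL2Z) : Matrix (Fin 2) (Fin 2) ℤ).mulVec v.toAdd)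
  left_inv v := by
    simp only [toAdd_ofAdd, Matrix.mulVec_mulVec, Units.inv_mul, Matrix.one_mulVec, ofAdd_toAdd]
  right_inv v := by
    simp only [toAdd_ofAdd, Matrix.mulVec_mulVec, Units.mul_inv, Matrix.one_mulVec, ofAdd_toAdd]
  map_mul' x y := by simp only [Matrix.mulVec_add, toAdd_mul, ofAdd_add]

/-- The action homomorphism `GL(2,ℤ) →* Aut(ℤ²)`. -/
def glAutHom : GL2Z →* MulAut Z2 where
  toFun := glAut
  map_one' := by ext v; simp [glAut]
  map_mul' A B := by
    ext v : 1
    simp only [glAut, MulAut.mul_apply, MulEquiv.coe_mk, Equiv.coe_fn_mk, toAdd_ofAdd,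
      Units.val_mul, Matrix.mulVec_mulVec]

/-- Given a homomorphism `φ : ℤ → GL(2,ℤ)`, the semidirect product `Γ = ℤ² ⋊_φ ℤ`. -/
abbrev GammaSD (φ : Multiplicative ℤ →* GL2Z) :=
  SemidirectProduct Z2 (Multiplicative ℤ) (glAutHom.comp φ)

/-!
Split a subgroup `H ≅ ℤ³` of `ℤ² ⋊ ℤ` by its projection `c : H → ℤ`. The kernel of `c` lies in
`ℤ²`, and each of its elements commutes with every `g ∈ H`, so it is fixed by `A ^ c(g)`. If
`c = 0`, then `ℤ³` embeds in `ℤ²`. Otherwise some `A ^ n` with `n ≠ 0` fixes the whole kernel; the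
vectors fixed by a nonzero power of a parabolic matrix form a group of rank one, so rank-nullity
gives `3 ≤ 1 + 1`.
-/

namespace SemidirectProduct

variable {N G : Type*} [CommGroup N] [Group G] {φ : G →* MulAut N}

theorem commute_inl_iff {g : N ⋊[φ] G} {n : N} : Commute g (inl n) ↔ φ g.right n = n := by
  rw [Commute, SemiconjBy, SemidirectProduct.ext_iff]
  simp [mul_comm g.left]

end SemidirectProduct

section

open SemidirectProduct Multiplicative

variable {M V W : Type*} [AddCommGroup M] [AddCommGroup V] [AddCommGroup W]
  {φ : Multiplicative W →* MulAut (Multiplicative V)}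
  (ρ : Multiplicative M →* Multiplicative V ⋊[φ] Multiplicative W)

def rightPart : M →ₗ[ℤ] W :=
  (AddMonoidHom.mk' (fun x ↦ toAdd (ρ (ofAdd x)).right) fun x y ↦ by
    simp [ofAdd_add]).toIntLinearMap

theorem right_eq_one_of_mem_ker {x : M} (hx : x ∈ LinearMap.ker (rightPart ρ)) :
    (ρ (ofAdd x)).right = 1 :=
  congrArg ofAdd (LinearMap.mem_ker.mp hx)

def kerLeftPart : LinearMap.ker (rightPart ρ) →ₗ[ℤ] V :=
  (AddMonoidHom.mk' (fun x : LinearMap.ker (rightPart ρ) ↦ toAdd (ρ (ofAdd (x : M))).left)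
    fun x y ↦ by simp [ofAdd_add, right_eq_one_of_mem_ker ρ x.2]).toIntLinearMap

theorem inl_kerLeftPart (x : LinearMap.ker (rightPart ρ)) :
    inl (ofAdd (kerLeftPart ρ x)) = ρ (ofAdd (x : M)) := by
  ext
  · rfl
  · exact (right_eq_one_of_mem_ker ρ x.2).symm

theorem kerLeftPart_injective (hρ : Function.Injective ρ) :
    Function.Injective (kerLeftPart ρ) := by
  refine (injective_iff_map_eq_zero _).mpr fun x hx ↦ ?_
  have : ρ (ofAdd (x : M)) = ρ 1 := by
    rw [← inl_kerLeftPart, hx, map_one]; rfl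
  exact Subtype.ext (congrArg toAdd (hρ this))

theorem aut_rightPart_kerLeftPart (x : LinearMap.ker (rightPart ρ)) (y : M) :
    φ (ofAdd (rightPart ρ y)) (ofAdd (kerLeftPart ρ x)) = ofAdd (kerLeftPart ρ x) := by
  have h : Commute (ρ (ofAdd y)) (inl (ofAdd (kerLeftPart ρ x))) := by
    rw [inl_kerLeftPart]
    exact (Commute.all _ _).map ρ
  exact commute_inl_iff.mp h

end

universe u

theorem LinearMap.rank_le_rank_range_add_of_injective_ker {R : Type*} {M N P : Type u} [Ring R]
    [HasRankNullity.{u} R] [AddCommGroup M] [Module R M] [AddCommGroup N] [Module R N]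
    [AddCommGroup P] [Module R P] (f : M →ₗ[R] N) (g : LinearMap.ker f →ₗ[R] P)
    (hg : Function.Injective g) :
    Module.rank R M ≤ Module.rank R (LinearMap.range f) + Module.rank R P := by
  rw [← f.rank_range_add_rank_ker]
  gcongr
  exact g.rank_le_of_injective hg

open Matrix.SpecialLinearGroup ModularGroup in
theorem IsParabolic.exists_linearMap_eq_zero_of_fixed {A : GL2Z} (hA : IsParabolic A) {n : ℤ}
    (hn : n ≠ 0) : ∃ f : (Fin 2 → ℤ) →ₗ[ℤ] ℤ,
      ∀ w, ((A ^ n : GL2Z) : Matrix (Fin 2) (Fin 2) ℤ) *ᵥ w = w → f w = 0 → w = 0 := by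
  obtain ⟨P, s, hs, hPA⟩ := hA
  refine ⟨LinearMap.proj 0 ∘ₗ (P : Matrix (Fin 2) (Fin 2) ℤ).mulVecLin, fun w hw hw0 ↦ ?_⟩
  have hT : P * A * P⁻¹ = toGL (T ^ s) := Units.ext (hPA.trans (coe_T_zpow s).symm)
  -- `P` conjugates `A ^ n` to `T ^ (s * n)`, whose fixed vectors are those with second coordinate 0.
  have hconj : ((P * A ^ n * P⁻¹ : GL2Z) : Matrix (Fin 2) (Fin 2) ℤ) = !![1, s * n; 0, 1] := by
    rw [← conj_zpow, hT, ← map_zpow, ← _root_.zpow_mul]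
    exact coe_T_zpow (s * n)
  set u := (P : Matrix (Fin 2) (Fin 2) ℤ) *ᵥ w with hu_def
  have hu : !![1, s * n; 0, 1] *ᵥ u = u := by
    rw [← hconj, hu_def, mulVec_mulVec, ← Units.val_mul,
      show P * A ^ n * P⁻¹ * P = P * A ^ n by group, Units.val_mul, ← mulVec_mulVec, hw]
  have hu1 : u 1 = 0 := by
    simpa [mulVec, dotProduct, Fin.sum_univ_two, hs, hn] using congrFun hu 0
  have hu0 : u 0 = 0 := hw0
  have hu_zero : u = 0 := by
    ext i; fin_cases i <;> assumption
  exact mulVec_injective_of_isUnit P.isUnit (hu_zero.trans (mulVec_zero _).symm)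

theorem MonoidHom.map_ofAdd_eq_zpow {G : Type*} [Group G] (φ : Multiplicative ℤ →* G) (n : ℤ) :
    φ (Multiplicative.ofAdd n) = φ (Multiplicative.ofAdd 1) ^ n := by
  rw [← map_zpow, ← ofAdd_zsmul, smul_eq_mul, mul_one]

theorem mulVec_kerLeftPart {M : Type*} [AddCommGroup M] {φ : Multiplicative ℤ →* GL2Z}
    (ρ : Multiplicative M →* GammaSD φ) (x : LinearMap.ker (rightPart ρ)) (y : M) :
    ((φ (Multiplicative.ofAdd 1) ^ rightPart ρ y : GL2Z) : Matrix (Fin 2) (Fin 2) ℤ) *ᵥ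
      kerLeftPart ρ x = kerLeftPart ρ x := by
  rw [← φ.map_ofAdd_eq_zpow]
  exact congrArg Multiplicative.toAdd (aut_rightPart_kerLeftPart ρ x y)

/-- If `φ : ℤ → GL(2,ℤ)` is a homomorphism with `A = φ(1)` parabolic, then
`Γ = ℤ² ⋊_φ ℤ` contains no subgroup isomorphic to `ℤ³`. -/
theorem stmt3 (φ : Multiplicative ℤ →* GL2Z)
    (hA : IsParabolic (φ (Multiplicative.ofAdd 1)))
    (H : Subgroup (GammaSD φ)) :
    ¬ Nonempty (H ≃* Multiplicative (Fin 3 → ℤ)) := by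
  rintro ⟨e⟩
  set ρ := H.subtype.comp e.symm.toMonoidHom
  have hρ : Function.Injective ρ := H.subtype_injective.comp e.symm.injective
  by_cases hc : rightPart ρ = 0
  · have h := (rightPart ρ).rank_le_rank_range_add_of_injective_ker _ (kerLeftPart_injective ρ hρ)
    rw [hc, LinearMap.range_zero, rank_bot, rank_fin_fun, rank_fin_fun] at h
    norm_num at h
  · obtain ⟨y, hy⟩ : ∃ y, rightPart ρ y ≠ 0 := by
      by_contra! h
      exact hc (LinearMap.ext h)
    obtain ⟨f, hf⟩ := hA.exists_linearMap_eq_zero_of_fixed hy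
    have hinj : Function.Injective (f ∘ₗ kerLeftPart ρ) := by
      refine (injective_iff_map_eq_zero _).mpr fun x hx ↦ kerLeftPart_injective ρ hρ ?_
      rw [map_zero]
      exact hf _ (mulVec_kerLeftPart ρ x y) hx
    have h := (rightPart ρ).rank_le_rank_range_add_of_injective_ker _ hinj
    have hrange := Submodule.rank_le (LinearMap.range (rightPart ρ))
    rw [rank_fin_fun, Module.rank_self] at h
    rw [Module.rank_self] at hrange
    have h3 := h.trans (add_le_add_left hrange 1)
    norm_num at h3
end

section
/- Let G be a group containing a normal infinite cyclic subgroup N such that the quotient G/N is infinite cyclic. Then G contains a finite-index subgroup isomorphic to ℤ × ℤ; that is, G is virtually ℤ². -/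
/-!
Conjugation by an element `g` mapping to a generator of `G/N ≅ ℤ` is an automorphism of `N ≅ ℤ`,
hence `±1`, so `t = g²` centralises `N`. Then `(n, k) ↦ n tᵏ` is an injective homomorphism
`N × ℤ → G` (apply `G → G/N` to see `k = 0`), and its image contains the preimage of `⟨2⟩ ≤ G/N`,
a subgroup of index `2`.
-/

open Subgroup Multiplicative

theorem MulAut.multiplicative_int_sq_eq_one (σ : MulAut (Multiplicative ℤ)) : σ ^ 2 = 1 := by
  obtain ⟨u, hu⟩ : ∃ u : ℤ, σ (ofAdd 1) = ofAdd u := ⟨_, rfl⟩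
  have hσ (k : ℤ) : σ (ofAdd k) = ofAdd (k * u) := by
    rw [show ofAdd k = ofAdd (1 : ℤ) ^ k by simp [← ofAdd_zsmul], map_zpow, hu, ← ofAdd_zsmul,
      smul_eq_mul]
  have hu_mul_self : u * u = 1 := by
    obtain ⟨y, hy⟩ := σ.surjective (ofAdd 1)
    rw [← ofAdd_toAdd y, hσ, EmbeddingLike.apply_eq_iff_eq] at hy
    exact Int.isUnit_mul_self (.of_mul_eq_one_right _ hy)
  ext x
  rw [pow_two, MulAut.mul_apply, ← ofAdd_toAdd x, hσ, hσ, mul_assoc, hu_mul_self, mul_one,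
    MulAut.one_apply]

theorem Subgroup.commute_sq_of_mulEquiv_int {G : Type*} [Group G] {N : Subgroup G} [N.Normal]
    (ψ : N ≃* Multiplicative ℤ) (g : G) {n : G} (hn : n ∈ N) : Commute n (g ^ 2) := by
  have hconj : MulAut.conjNormal (g ^ 2) = (1 : MulAut N) :=
    (MulAut.congr ψ).injective <| by
      rw [map_pow, map_pow, MulAut.multiplicative_int_sq_eq_one, map_one]
  have := congrArg Subtype.val (DFunLike.congr_fun hconj ⟨n, hn⟩)
  rw [MulAut.conjNormal_apply, MulAut.one_apply] at this
  exact (mul_inv_eq_iff_eq_mul.mp this).symm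

theorem Subgroup.finiteIndex_zpowers_int {x : Multiplicative ℤ} (hx : x ≠ 1) :
    (zpowers x).FiniteIndex := by
  have : zpowers x = AddSubgroup.toSubgroup (AddSubgroup.zmultiples (toAdd x)) := rfl
  rw [finiteIndex_iff, this, AddSubgroup.index_toSubgroup, Int.index_zmultiples]
  simpa using hx

section

variable {G : Type*} [Group G] {N : Subgroup G} {φ : G →* Multiplicative ℤ} {t : G}
  (comm : ∀ (n : N) (k : Multiplicative ℤ), Commute (N.subtype n) (zpowersHom G t k))

theorem Subgroup.injective_noncommCoprod_zpowersHom (hN : N ≤ φ.ker) (ht : φ t ≠ 1) :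
    Function.Injective (N.subtype.noncommCoprod (zpowersHom G t) comm) := by
  refine (injective_iff_map_eq_one _).mpr fun ⟨n, k⟩ h => ?_
  rw [MonoidHom.noncommCoprod_apply, coe_subtype, zpowersHom_apply] at h
  have hk : k = 1 := by
    simpa [MonoidHom.mem_ker.mp (hN n.2), ht] using congrArg φ h
  subst hk
  simp only [toAdd_one, zpow_zero, mul_one, OneMemClass.coe_eq_one] at h
  rw [h, Prod.mk_one_one]

theorem Subgroup.finiteIndex_range_noncommCoprod_zpowersHom (hker : φ.ker ≤ N)
    (hφ : Function.Surjective φ) (ht : φ t ≠ 1) :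
    (N.subtype.noncommCoprod (zpowersHom G t) comm).range.FiniteIndex := by
  have : ((zpowers (φ t)).comap φ).FiniteIndex := by
    rw [finiteIndex_iff, index_comap_of_surjective _ hφ]
    exact finiteIndex_iff.mp (finiteIndex_zpowers_int ht)
  refine finiteIndex_of_le (H := (zpowers (φ t)).comap φ) fun x hx => ?_
  obtain ⟨k, hk⟩ := mem_zpowers_iff.mp (mem_comap.mp hx)
  have hxN : x * (t ^ k)⁻¹ ∈ N := hker <| by simp [← hk]
  exact ⟨(⟨_, hxN⟩, ofAdd k), by simp⟩

end

/-- If a group `G` contains a normal infinite cyclic subgroup `N` such that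
the quotient `G/N` is infinite cyclic, then `G` contains a finite-index subgroup
isomorphic to `ℤ × ℤ`; that is, `G` is virtually `ℤ²`. -/
theorem stmt9 {G : Type*} [Group G] (N : Subgroup G) [N.Normal]
    (hN : Nonempty (N ≃* Multiplicative ℤ))
    (hQ : Nonempty ((G ⧸ N) ≃* Multiplicative ℤ)) :
    ∃ H : Subgroup G, H.FiniteIndex ∧ Nonempty (H ≃* Multiplicative (ℤ × ℤ)) := by
  obtain ⟨ψ⟩ := hN
  obtain ⟨e⟩ := hQ
  set φ : G →* Multiplicative ℤ := (e : G ⧸ N →* Multiplicative ℤ).comp (QuotientGroup.mk' N)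
  have hker : φ.ker = N := by rw [MonoidHom.ker_mulEquiv_comp, QuotientGroup.ker_mk']
  have hφ : Function.Surjective φ := e.surjective.comp (QuotientGroup.mk'_surjective N)
  obtain ⟨g, hg⟩ := hφ (ofAdd 1)
  have ht : φ (g ^ 2) ≠ 1 := by
    rw [map_pow, hg, ← ofAdd_nsmul]
    decide
  have comm (n : N) (k : Multiplicative ℤ) : Commute (N.subtype n) (zpowersHom G (g ^ 2) k) :=
    (commute_sq_of_mulEquiv_int ψ g n.2).zpow_right _
  refine ⟨_, finiteIndex_range_noncommCoprod_zpowersHom comm hker.le hφ ht, ⟨?_⟩⟩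
  exact (MonoidHom.ofInjective (injective_noncommCoprod_zpowersHom comm hker.ge ht)).symm.trans
    ((ψ.prodCongr (MulEquiv.refl _)).trans (MulEquiv.prodMultiplicative ℤ ℤ).symm)
end

section
/- Let G be a group containing a finite normal subgroup F such that the quotient G/F is isomorphic to a subgroup of the infinite dihedral group D_∞. Then G is virtually cyclic. -/
/-!
Composing the quotient map with the embedding gives a homomorphism `G → D_∞` with finite
kernel `F`, and virtual cyclicity pulls back along such homomorphisms: the preimage `H` of a
finite-index cyclic subgroup `C` has finite index, and if `g ∈ H` maps to a generator of the
image of `H` in `C`, then `H = ⟨g⟩ · ker`, so `⟨g⟩` has finite index in `H`. Finally `D_∞` is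
virtually cyclic, since its rotations form a cyclic subgroup of index 2.
-/

open Subgroup

namespace Group

def IsVirtuallyCyclic (G : Type*) [Group G] : Prop :=
  ∃ H : Subgroup G, H.FiniteIndex ∧ IsCyclic H

end Group

open Group

section

variable {G A : Type*} [Group G] [Group A]

theorem Subgroup.finiteIndex_of_sup_eq_top {K N : Subgroup G} [N.Normal] [Finite N]
    (h : K ⊔ N = ⊤) : K.FiniteIndex := by
  have hsurj : Function.Surjective fun n : N ↦ (n : G ⧸ K) := by
    rintro ⟨x⟩
    obtain ⟨n, hn, k, hk, rfl⟩ :=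
      mem_sup_of_normal_left.mp (sup_comm K N ▸ h ▸ mem_top x : x ∈ N ⊔ K)
    exact ⟨⟨n, hn⟩, QuotientGroup.eq.mpr (by simpa using hk)⟩
  have := Finite.of_surjective _ hsurj
  exact finiteIndex_of_finite_quotient

theorem Group.IsVirtuallyCyclic.of_finiteIndex {H : Subgroup G} [H.FiniteIndex]
    (h : IsVirtuallyCyclic H) : IsVirtuallyCyclic G := by
  obtain ⟨C, hC, hCcyc⟩ := h
  refine ⟨C.map H.subtype, ⟨?_⟩, ?_⟩
  · rw [index_map_subtype]
    exact mul_ne_zero hC.index_ne_zero FiniteIndex.index_ne_zero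
  · exact isCyclic_of_surjective _ (equivMapOfInjective C _ H.subtype_injective).surjective

theorem Group.isVirtuallyCyclic_of_isCyclic_range (φ : G →* A) [Finite φ.ker]
    [IsCyclic φ.range] : IsVirtuallyCyclic G := by
  obtain ⟨a, ha⟩ := (φ.range.isCyclic_iff_exists_zpowers_eq_top).mp inferInstance
  obtain ⟨g, rfl⟩ : a ∈ φ.range := ha ▸ mem_zpowers a
  have hsup : zpowers g ⊔ φ.ker = ⊤ := by
    rw [← comap_map_eq, MonoidHom.map_zpowers, ha, MonoidHom.comap_range_self]
  exact ⟨zpowers g, finiteIndex_of_sup_eq_top hsup, inferInstance⟩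

theorem Subgroup.finiteIndex_comap (C : Subgroup A) [C.FiniteIndex] (φ : G →* A) :
    (C.comap φ).FiniteIndex :=
  ⟨by rw [index_comap]; exact isFiniteRelIndex_of_finiteIndex.relIndex_ne_zero⟩

theorem Group.IsVirtuallyCyclic.of_finite_ker (φ : G →* A) [Finite φ.ker]
    (hA : IsVirtuallyCyclic A) : IsVirtuallyCyclic G := by
  obtain ⟨C, hC, hCcyc⟩ := hA
  have := C.finiteIndex_comap φ
  have : Finite (φ.subgroupComap C).ker :=
    Finite.of_injective (fun x ↦ (⟨x.1.1, congrArg Subtype.val x.2⟩ : φ.ker))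
      fun _ _ h ↦ Subtype.ext (Subtype.ext (Subtype.mk.inj h))
  exact (isVirtuallyCyclic_of_isCyclic_range (φ.subgroupComap C)).of_finiteIndex

end

namespace DihedralGroup

variable {n : ℕ}

theorem r_mem_zpowers_r_one (i : ZMod n) : r i ∈ zpowers (r 1 : DihedralGroup n) :=
  ⟨(i.cast : ℤ), by simp⟩

theorem sr_notMem_zpowers_r_one (i : ZMod n) : sr i ∉ zpowers (r 1 : DihedralGroup n) := by
  rintro ⟨k, hk⟩
  simp at hk

theorem index_zpowers_r_one : (zpowers (r 1 : DihedralGroup n)).index = 2 :=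
  index_eq_two_iff.mpr ⟨sr 0, by
    rintro (i | i) <;> simp [r_mul_sr, sr_mul_sr, r_mem_zpowers_r_one, sr_notMem_zpowers_r_one]⟩

theorem isVirtuallyCyclic : IsVirtuallyCyclic (DihedralGroup n) :=
  ⟨zpowers (r 1), ⟨by simp [index_zpowers_r_one]⟩, inferInstance⟩

end DihedralGroup

/-- If a group `G` contains a finite normal subgroup `F` such that the
quotient `G/F` is isomorphic to a subgroup of the infinite dihedral group `D_∞`, then
`G` is virtually cyclic, i.e. `G` contains a finite-index cyclic subgroup. -/
theorem stmt12 {G : Type*} [Group G] (F : Subgroup G) [F.Normal] (hF : Finite F)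
    (f : G ⧸ F →* DihedralGroup 0) (hf : Function.Injective f) :
    ∃ H : Subgroup G, H.FiniteIndex ∧ IsCyclic H := by
  have : Finite (f.comp (QuotientGroup.mk' F)).ker := by
    rwa [MonoidHom.ker_comp_of_injective _ _ hf, QuotientGroup.ker_mk']
  exact DihedralGroup.isVirtuallyCyclic.of_finite_ker (f.comp (QuotientGroup.mk' F))
end
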